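/- arXiv:2504.01107 — 2 statements merged into one kernel-verified Lean document; each statement's English description precedes it below -/
import Mathlib

section
/- Let n = 2r₁+⋯+2r_m, γ = γ_{2r₁,…,2r_m}, and O the set of odd numbers in [n]. The half map π ↦ π̌, defined by π̌(k) = π(π(2k))/2, is a bijection from the set {π ∈ S_n : π is parity reversing and γπ⁻¹ separates the points of O} onto S_{r₁+⋯+r_m}. Its inverse sends σ ∈ S_{r₁+⋯+r_m} to the double σ̂ defined by σ̂(2k) = γ(2k) and σ̂(γ(2k)) = 2σ(k). -/
/-!
Both `π` and `γ` reverse parity, so `γπ⁻¹` maps the paper's odd points `O` into `O`; a permutation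
that maps `O` into itself and separates it must fix it pointwise. Hence `π` agrees with `γ` on the
even points `2k`, and `π` is then determined by its values at the points `γ(2k)`, which the half
condition `π(π(2k)) = 2σ(k)` prescribes. Conversely these two rules define a parity-reversing
permutation, the double `σ̂`, for every `σ`.
-/

open Equiv

namespace ThirdOrderFree

variable {α : Type*}

/-- The setoid whose classes are the cycles (orbits) of a permutation. -/
def sameCycleSetoid (σ : Perm α) : Setoid α :=
  ⟨σ.SameCycle,
    ⟨fun x => Equiv.Perm.SameCycle.refl σ x, fun h => h.symm, fun h h' => h.trans h'⟩⟩

/-- Number of cycles (orbits, including fixed points) of a permutation. -/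
noncomputable def numCycles (σ : Perm α) : ℕ :=
  Nat.card (Quotient (sameCycleSetoid σ))

/-- The length `|σ| = n - #(σ)`. -/
noncomputable def len (σ : Perm α) : ℕ :=
  Nat.card α - numCycles σ

/-- Join of the cycle partitions of two permutations. -/
def joinSetoid (π σ : Perm α) : Setoid α :=
  sameCycleSetoid π ⊔ sameCycleSetoid σ

/-- Number of blocks of `π ∨ σ`. -/
noncomputable def numBlocks (π σ : Perm α) : ℕ :=
  Nat.card (Quotient (joinSetoid π σ))

/-- `π ∨ σ` is the one-block partition. -/
def JoinTop (π σ : Perm α) : Prop :=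
  ∀ x y : α, (joinSetoid π σ).r x y

/-- `π` is a non-crossing (annular) permutation with respect to `γ`. -/
def SNC (γ π : Perm α) : Prop :=
  JoinTop π γ ∧
    numCycles π + numCycles (π⁻¹ * γ) + numCycles γ = Nat.card α + 2

/-- `τ` separates the points of `N`: no cycle of `τ` contains two distinct points of `N`. -/
def Separates (τ : Perm α) (N : Set α) : Prop :=
  ∀ x ∈ N, ∀ y ∈ N, τ.SameCycle x y → x = y

/-- The first-return map of `σ` on the set `{x | p x}`. -/
noncomputable def firstReturn (σ : Perm α) (p : α → Prop) (x : α) : α :=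
  (σ ^ sInf {k : ℕ | 0 < k ∧ p ((σ ^ k) x)}) x

open Classical in
/-- The restriction of `σ` to `{x | p x}`: the unique permutation agreeing with the
first-return map (it exists whenever `α` is finite). -/
noncomputable def restrictPerm (σ : Perm α) (p : α → Prop) : Perm {x // p x} :=
  if h : ∃ e : Perm {x // p x}, ∀ x : {x // p x}, (e x : α) = firstReturn σ p (x : α)
  then h.choose else 1

/-- `π ≤ σ` : each cycle of `π` is contained in a cycle of `σ` and on each cycle of
`σ` the restriction of `π` is a non-crossing permutation of that cycle. -/
def le' (π σ : Perm α) : Prop :=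
  (∀ x y : α, π.SameCycle x y → σ.SameCycle x y) ∧
  ∀ x : α,
    numCycles (restrictPerm π (σ.SameCycle x)) +
      numCycles ((restrictPerm π (σ.SameCycle x))⁻¹ * restrictPerm σ (σ.SameCycle x)) =
      Nat.card {y // σ.SameCycle x y} + 1

/-- `π ≲ σ` : on each block of `π ∨ σ`, `π` is annular non-crossing w.r.t. `σ`. -/
def ncRel (π σ : Perm α) : Prop :=
  ∀ x : α,
    SNC (restrictPerm σ ((joinSetoid π σ).r x)) (restrictPerm π ((joinSetoid π σ).r x))

/-- The permutation of `Σ i, Fin (n i)` rotating each block: the product of the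
directed cycles `T i` of lengths `n i`. -/
def blockRotate {ι : Type*} (n : ι → ℕ) : Perm ((i : ι) × Fin (n i)) :=
  Equiv.sigmaCongrRight fun i => finRotate (n i)

/-- The first elements of the blocks. -/
def zeroSection {ι : Type*} (n : ι → ℕ) (hn : ∀ i, 0 < n i) :
    ι ≃ {x : (i : ι) × Fin (n i) // x.2.val = 0} where
  toFun i := ⟨⟨i, ⟨0, hn i⟩⟩, rfl⟩
  invFun x := x.1.1
  left_inv i := rfl
  right_inv := fun x => by
    obtain ⟨⟨i, j⟩, hj⟩ := x
    exact Subtype.ext (congrArg (Sigma.mk i) (Fin.ext hj.symm))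

/-- `π_{\vec n}` : merge the blocks `T i` along the cycles of `π`; within a block it
moves forward, and the last element of block `i` is sent to the first element of
block `π i`. -/
def mergePerm {ι : Type*} (n : ι → ℕ) (hn : ∀ i, 0 < n i) (π : Perm ι) :
    Perm ((i : ι) × Fin (n i)) :=
  (π.extendDomain (zeroSection n hn)) * blockRotate n


section Separation

variable {N : Set α}

theorem Separates.apply_eq_self {τ : Perm α} (h : Separates τ N) {x : α} (hx : x ∈ N)
    (hτx : τ x ∈ N) : τ x = x :=
  h _ hτx _ hx (Perm.SameCycle.refl τ x).apply_left

theorem separates_of_forall_mem_apply_eq_self {τ : Perm α} (h : ∀ x ∈ N, τ x = x) :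
    Separates τ N :=
  fun x hx _ _ hxy => hxy.eq_of_left (h x hx)

/-- For `y ∈ N` the point `γ (π⁻¹ y)` lies again in `N` and in the cycle of `y`, so separation
forces `γ π⁻¹` to fix `N` pointwise. -/
theorem separates_mul_inv_iff {γ π : Perm α} (hγ : ∀ x, γ x ∈ N ↔ x ∉ N)
    (hπ : ∀ x, π x ∈ N ↔ x ∉ N) :
    Separates (γ * π⁻¹) N ↔ ∀ x ∉ N, π x = γ x := by
  constructor
  · intro h x hx
    have hγx : γ x ∈ N := (hγ x).2 hx
    have hπγx : π⁻¹ (γ x) ∉ N := (hπ _).1 (by simpa using hγx)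
    have hfix : γ (π⁻¹ (γ x)) = γ x := h.apply_eq_self hγx ((hγ _).2 hπγx)
    exact (Perm.inv_eq_iff_eq.1 (γ.injective hfix)).symm
  · intro h
    refine separates_of_forall_mem_apply_eq_self fun y hy => ?_
    have hπy : π (γ⁻¹ y) = y := by simpa using h (γ⁻¹ y) ((hγ _).1 (by simpa using hy))
    rw [Perm.mul_apply, ← Perm.eq_inv_iff_eq.2 hπy]
    simp

end Separation

section Double

variable {β : Type*} {N : Set α} {γ : Perm α} {d : β → α}

theorem bijective_sumElim_comp (hγ : ∀ x, γ x ∈ N ↔ x ∉ N) (hd : Function.Injective d)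
    (hdN : Set.range d = Nᶜ) : Function.Bijective (Sum.elim d (γ ∘ d)) := by
  refine ⟨hd.sumElim (γ.injective.comp hd) fun u v huv => ?_, fun y => ?_⟩
  · exact hdN.subset ⟨u, rfl⟩ (huv ▸ (hγ (d v)).2 (hdN.subset ⟨v, rfl⟩))
  · by_cases hy : y ∈ N
    · obtain ⟨u, hu⟩ : γ⁻¹ y ∈ Set.range d := hdN ▸ (hγ _).1 (by simpa using hy)
      exact ⟨Sum.inr u, by simp [hu]⟩
    · obtain ⟨u, hu⟩ : y ∈ Set.range d := hdN ▸ hy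
      exact ⟨Sum.inl u, hu⟩

theorem perm_ext_of_agree_on_pairs (hγ : ∀ x, γ x ∈ N ↔ x ∉ N) (hd : Function.Injective d)
    (hdN : Set.range d = Nᶜ) {π π' : Perm α} (hd' : ∀ u, π (d u) = π' (d u))
    (hγd : ∀ u, π (γ (d u)) = π' (γ (d u))) : π = π' :=
  Equiv.ext <| (bijective_sumElim_comp hγ hd hdN).2.forall.2 <| Sum.forall.2 ⟨hd', hγd⟩

theorem exists_double (hγ : ∀ x, γ x ∈ N ↔ x ∉ N) (hd : Function.Injective d)
    (hdN : Set.range d = Nᶜ) (σ : Perm β) :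
    ∃ π : Perm α, (∀ u, π (d u) = γ (d u)) ∧ ∀ u, π (γ (d u)) = d (σ u) := by
  let e := Equiv.ofBijective _ (bijective_sumElim_comp hγ hd hdN)
  refine ⟨e.permCongr ((sumCongr (Equiv.refl β) σ).trans (sumComm β β)), fun u => ?_, fun u => ?_⟩
  · change e.permCongr _ (e (Sum.inl u)) = e (Sum.inr u)
    rw [Equiv.permCongr_apply, e.symm_apply_apply]
    rfl
  · change e.permCongr _ (e (Sum.inr u)) = e (Sum.inl (σ u))
    rw [Equiv.permCongr_apply, e.symm_apply_apply]
    rfl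

theorem parity_separates_half_iff (hγ : ∀ x, γ x ∈ N ↔ x ∉ N) (hd : Function.Injective d)
    (hdN : Set.range d = Nᶜ) (σ : Perm β) {π : Perm α} :
    ((∀ x, π x ∈ N ↔ x ∉ N) ∧ Separates (γ * π⁻¹) N ∧ ∀ u, π (π (d u)) = d (σ u)) ↔
      (∀ x ∉ N, π x = γ x) ∧ ∀ u, π (γ (d u)) = d (σ u) := by
  have hdu (u : β) : d u ∉ N := hdN.subset ⟨u, rfl⟩
  constructor
  · rintro ⟨hπ, hsep, hhalf⟩
    have hodd := (separates_mul_inv_iff hγ hπ).1 hsep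
    exact ⟨hodd, fun u => hodd _ (hdu u) ▸ hhalf u⟩
  · rintro ⟨hodd, heven⟩
    have hπ : ∀ x, π x ∈ N ↔ x ∉ N := (bijective_sumElim_comp hγ hd hdN).2.forall.2 <|
      Sum.forall.2 ⟨fun u => by simp [hodd _ (hdu u), hγ, hdu],
        fun u => by simp [heven, hγ, hdu]⟩
    refine ⟨hπ, (separates_mul_inv_iff hγ hπ).2 hodd, fun u => ?_⟩
    rw [hodd _ (hdu u), heven]

theorem existsUnique_half_eq (hγ : ∀ x, γ x ∈ N ↔ x ∉ N) (hd : Function.Injective d)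
    (hdN : Set.range d = Nᶜ) (σ : Perm β) :
    (∃! π : Perm α,
      (∀ x, π x ∈ N ↔ x ∉ N) ∧ Separates (γ * π⁻¹) N ∧ ∀ u, π (π (d u)) = d (σ u)) ∧
    ∀ π : Perm α,
      ((∀ x, π x ∈ N ↔ x ∉ N) ∧ Separates (γ * π⁻¹) N ∧ ∀ u, π (π (d u)) = d (σ u)) →
        (∀ x ∉ N, π x = γ x) ∧ ∀ u, π (γ (d u)) = d (σ u) := by
  simp only [parity_separates_half_iff hγ hd hdN σ, imp_self, implies_true, and_true]
  have hdu (u : β) : d u ∉ N := hdN.subset ⟨u, rfl⟩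
  obtain ⟨π₀, hodd₀, heven₀⟩ := exists_double hγ hd hdN σ
  have hodd₀' : ∀ x ∉ N, π₀ x = γ x := fun x hx => by
    obtain ⟨u, rfl⟩ := hdN.symm.subset hx
    exact hodd₀ u
  refine ⟨π₀, ⟨hodd₀', heven₀⟩, fun π ⟨hodd, heven⟩ => ?_⟩
  exact perm_ext_of_agree_on_pairs hγ hd hdN (fun u => by rw [hodd _ (hdu u), hodd₀])
    fun u => by rw [heven, heven₀]

end Double

section Blocks

variable {ι : Type*}

theorem finRotate_mod_two_eq_zero_iff {n : ℕ} (hn : Even n) (k : Fin n) :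
    (finRotate n k : ℕ) % 2 = 0 ↔ ¬(k : ℕ) % 2 = 0 := by
  cases n with
  | zero => exact k.elim0
  | succ n =>
    rw [coe_finRotate]
    obtain ⟨j, hj⟩ := hn
    split_ifs with hk
    · rw [hk, Fin.val_last]
      omega
    · omega

theorem blockRotate_mod_two_eq_zero_iff {n : ι → ℕ} (hn : ∀ i, Even (n i))
    (x : (i : ι) × Fin (n i)) :
    ((blockRotate n x).2 : ℕ) % 2 = 0 ↔ ¬(x.2 : ℕ) % 2 = 0 :=
  finRotate_mod_two_eq_zero_iff (hn x.1) x.2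

/-- The paper's `k ↦ 2k` on `1`-based positions is `j ↦ 2j+1` on `0`-based `Fin` values, so the
paper's odd points are those with `x.2.val % 2 = 0`. -/
def doubleIndex (r : ι → ℕ) (x : (i : ι) × Fin (r i)) : (i : ι) × Fin (2 * r i) :=
  ⟨x.1, ⟨2 * x.2.val + 1, by have := x.2.isLt; omega⟩⟩

theorem doubleIndex_injective (r : ι → ℕ) : Function.Injective (doubleIndex r) := by
  rintro ⟨i, a⟩ ⟨j, b⟩ h
  simp only [doubleIndex, Sigma.mk.inj_iff] at h
  obtain ⟨rfl, h⟩ := h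
  simp only [heq_iff_eq, Fin.mk.injEq] at h
  exact congrArg (Sigma.mk i) (Fin.ext (by omega))

theorem range_doubleIndex (r : ι → ℕ) :
    Set.range (doubleIndex r) = {x : (i : ι) × Fin (2 * r i) | x.2.val % 2 = 0}ᶜ := by
  ext ⟨i, k⟩
  simp only [Set.mem_range, Set.mem_compl_iff, Set.mem_ofPred_eq]
  constructor
  · rintro ⟨⟨j, a⟩, h⟩
    simp only [doubleIndex, Sigma.mk.inj_iff] at h
    obtain ⟨rfl, h⟩ := h
    rw [← eq_of_heq h]
    change ¬(2 * a.val + 1) % 2 = 0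
    omega
  · intro hk
    refine ⟨⟨i, ⟨k / 2, by omega⟩⟩, ?_⟩
    simp only [doubleIndex, Sigma.mk.inj_iff, heq_iff_eq, true_and]
    exact Fin.ext (by simp only; omega)

theorem mod_two_ne_mod_two_iff {a b : ℕ} : a % 2 ≠ b % 2 ↔ (a % 2 = 0 ↔ ¬b % 2 = 0) := by
  omega

end Blocks

/-- the half map is a bijection from parity-reversing permutations `π`
with `γπ⁻¹` separating the odds onto `S_{r₁+⋯+r_m}`: for each `σ` there is a unique
such `π` with half `σ`, and it is the double `σ̂`, i.e. `π(2k) = γ(2k)` and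
`π(γ(2k)) = 2σ(k)`. -/
theorem stmt15 (m : ℕ) (r : Fin m → ℕ)
    (γ : Equiv.Perm ((i : Fin m) × Fin (2 * r i)))
    (hγ : γ = blockRotate (fun i => 2 * r i))
    (dbl : ((i : Fin m) × Fin (r i)) → ((i : Fin m) × Fin (2 * r i)))
    (hdbl : ∀ x, dbl x = ⟨x.1, ⟨2 * x.2.val + 1, by have := x.2.isLt; omega⟩⟩) :
    ∀ σ : Equiv.Perm ((i : Fin m) × Fin (r i)),
      (∃! π : Equiv.Perm ((i : Fin m) × Fin (2 * r i)),
        (∀ x, (π x).2.val % 2 ≠ x.2.val % 2) ∧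
        Separates (γ * π⁻¹) {x | x.2.val % 2 = 0} ∧
        ∀ u, π (π (dbl u)) = dbl (σ u)) ∧
      ∀ π : Equiv.Perm ((i : Fin m) × Fin (2 * r i)),
        ((∀ x, (π x).2.val % 2 ≠ x.2.val % 2) ∧
          Separates (γ * π⁻¹) {x | x.2.val % 2 = 0} ∧
          ∀ u, π (π (dbl u)) = dbl (σ u)) →
        (∀ x : (i : Fin m) × Fin (2 * r i), x.2.val % 2 = 1 → π x = γ x) ∧
        ∀ u, π (γ (dbl u)) = dbl (σ u) := by
  intro σ
  obtain rfl : dbl = doubleIndex r := funext hdbl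
  have hγN : ∀ x, γ x ∈ {x : (i : Fin m) × Fin (2 * r i) | x.2.val % 2 = 0} ↔
      x ∉ {x : (i : Fin m) × Fin (2 * r i) | x.2.val % 2 = 0} :=
    hγ ▸ blockRotate_mod_two_eq_zero_iff fun i => even_two_mul (r i)
  simpa only [Set.mem_ofPred_eq, mod_two_ne_mod_two_iff, Nat.mod_two_ne_zero] using
    existsUnique_half_eq hγN (doubleIndex_injective r) (range_doubleIndex r) σ

end ThirdOrderFree
end

section
/- Let π ∈ S_NC(r,s,t) and let σ ∈ S_n satisfy: (1) σ ≤ π_⃗n, and (2) for each cycle C̃ of π_⃗n, the restriction σ|_{C̃} is non-crossing in NC(C̃) and (σ|_{C̃})⁻¹ · γ|_{C̃} separates the points of N ∩ C̃ (where γ|_{C̃} is the cycle of π_⃗n viewed via the order inherited from γ). Then σ ∈ S_NC(p,q,l) and σ⁻¹π_⃗n separates the points of N = {n₁, n₁+n₂, …, n}. -/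
/-
Write `π̃ = π_⃗n`, `γ̃ = γ_{p,q,l}` and `γ = γ_{r,s,t}`. Summing the defining identity of
`σ ≤ π̃` over the cycles of `π̃` gives `#σ + #(σ⁻¹π̃) = n + #π`, and gluing the local separation
hypotheses shows that `τ = σ⁻¹π̃` separates `N`. Now `σ⁻¹γ̃ = τρ` with `ρ = π̃⁻¹γ̃`, which fixes
every point outside `N` and acts on `N` as `π⁻¹γ` acts on the blocks. As `τ` separates `N`,
multiplying by `ρ` joins the cycles of `τ` through `N` along the cycles of `ρ`, so
`#(σ⁻¹γ̃) = #τ - (r + s + t) + #(π⁻¹γ)`; with `#π + #(π⁻¹γ) + #γ = r + s + t + 2` and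
`#γ̃ = #γ` this is the genus condition for `σ`. The same gluing puts the cycles of `ρ`, then of
`τ` and of `π̃ = στ`, inside `σ ∨ γ̃`, and `π̃ ∨ γ̃ = 1` because `π ∨ γ = 1`.
-/

open Equiv

namespace ThirdOrderFree

variable {α : Type*}

section Cycles

theorem sameCycleSetoid_inv (f : Perm α) : sameCycleSetoid f⁻¹ = sameCycleSetoid f :=
  Setoid.ext fun _ _ => Perm.sameCycle_inv

theorem sameCycle_apply_iff_of_le {f g : Perm α} (h : sameCycleSetoid f ≤ sameCycleSetoid g)
    (z x : α) : g.SameCycle z (f x) ↔ g.SameCycle z x :=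
  have hx : g.SameCycle x (f x) := h (Perm.SameCycle.refl f x).apply_right
  ⟨fun hz => hz.trans hx.symm, fun hz => hz.trans hx⟩

theorem JoinTop.mono {π γ π' γ' : Perm α} (h : JoinTop π γ)
    (hle : joinSetoid π γ ≤ joinSetoid π' γ') : JoinTop π' γ' :=
  fun x y => hle (h x y)

theorem card_quotient_of_rel_imp_eq (r : Setoid α) (h : ∀ x y, r x y → x = y) :
    Nat.card (Quotient r) = Nat.card α :=
  (Nat.card_congr (Equiv.ofBijective _
    ⟨fun x y hxy => h x y (Quotient.exact hxy), Quotient.mk_surjective⟩)).symm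

theorem numCycles_one : numCycles (1 : Perm α) = Nat.card α :=
  card_quotient_of_rel_imp_eq _ fun _ _ => Perm.sameCycle_one.1

theorem card_quotient_comap_subtype (r : Setoid α) (p : α → Prop) :
    Nat.card (Quotient (r.comap ((↑) : {x // p x} → α))) =
      Nat.card {q : Quotient r // ∃ x, p x ∧ ⟦x⟧ = q} :=
  Nat.card_congr <| (Setoid.comapQuotientEquiv _ r).trans <|
    Equiv.subtypeEquivRight fun q => by simp [Quotient.mk''_eq_mk]

theorem numCycles_subtypePerm (f : Perm α) {p : α → Prop} (hp : ∀ x, p (f x) ↔ p x) :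
    numCycles (f.subtypePerm hp) =
      Nat.card {q : Quotient (sameCycleSetoid f) // ∃ x, p x ∧ ⟦x⟧ = q} := by
  rw [← card_quotient_comap_subtype, numCycles]
  congr 2
  exact Setoid.ext fun _ _ => Perm.sameCycle_subtypePerm

theorem numCycles_permCongr {β : Type*} (e : α ≃ β) (f : Perm α) :
    numCycles (e.permCongr f) = numCycles f := by
  have h : ∀ x y, f.SameCycle x y ↔ (e.permCongr f).SameCycle (e x) (e y) := fun x y =>
    exists_congr fun k => by
      rw [← Equiv.permCongrHom_coe, ← map_zpow]
      simp [Equiv.permCongrHom_coe, e.injective.eq_iff]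
  exact (Nat.card_congr (Quotient.congr e h)).symm

variable [Finite α]

theorem _root_.Equiv.Perm.SameCycle.induction_apply {f : Perm α} {P : α → Prop}
    (hP : ∀ a, P a → P (f a)) {x y : α} (hxy : f.SameCycle x y) (hx : P x) : P y := by
  obtain ⟨k, rfl⟩ := hxy.exists_nat_pow_eq
  clear hxy
  induction k with
  | zero => exact hx
  | succ k ih => rw [pow_succ', Perm.mul_apply]; exact hP _ ih

theorem sameCycleSetoid_le_of_rel_apply {f : Perm α} {J : Setoid α} (h : ∀ a, J a (f a)) :
    sameCycleSetoid f ≤ J :=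
  fun x _ hxy =>
    Perm.SameCycle.induction_apply (fun a ha => J.iseqv.trans ha (h a)) hxy (J.iseqv.refl x)

theorem sameCycleSetoid_mul_le (f g : Perm α) :
    sameCycleSetoid (f * g) ≤ sameCycleSetoid f ⊔ sameCycleSetoid g :=
  sameCycleSetoid_le_of_rel_apply fun a =>
    (sameCycleSetoid f ⊔ sameCycleSetoid g).iseqv.trans
      (le_sup_right (a := sameCycleSetoid f) (Perm.SameCycle.refl g a).apply_right)
      (le_sup_left (b := sameCycleSetoid g) (Perm.SameCycle.refl f (g a)).apply_right)

theorem sameCycleSetoid_inv_mul_le_of_le {σ π : Perm α}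
    (h : sameCycleSetoid σ ≤ sameCycleSetoid π) :
    sameCycleSetoid (σ⁻¹ * π) ≤ sameCycleSetoid π := by
  simpa [sameCycleSetoid_inv, sup_eq_right.2 h] using sameCycleSetoid_mul_le σ⁻¹ π

theorem sameCycle_iff_of_eqOn {f g : Perm α} {x : α} (h : ∀ a, f.SameCycle x a → f a = g a)
    (y : α) : f.SameCycle x y ↔ g.SameCycle x y := by
  let P a := f.SameCycle x a ∧ g.SameCycle x a
  have hP : P x := ⟨.refl f x, .refl g x⟩
  constructor
  · intro hxy
    refine (Perm.SameCycle.induction_apply (P := P) (fun a ha => ?_) hxy hP).2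
    exact ⟨ha.1.apply_right, h a ha.1 ▸ ha.2.apply_right⟩
  · intro hxy
    refine (Perm.SameCycle.induction_apply (P := P) (fun a ha => ?_) hxy hP).1
    exact ⟨h a ha.1 ▸ ha.1.apply_right, ha.2.apply_right⟩

theorem card_quotient_eq_add (r : Setoid α) (N M : Set α)
    (hM : ∀ x, x ∈ M ↔ ∀ y, r x y → y ∉ N) :
    Nat.card (Quotient r) = Nat.card (Quotient (r.comap ((↑) : N → α))) +
      Nat.card (Quotient (r.comap ((↑) : M → α))) := by
  let meets (s : Set α) (q : Quotient r) : Prop := ∃ x, x ∈ s ∧ ⟦x⟧ = q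
  have hcompl : ∀ q, ¬ meets N q ↔ meets M q := by
    refine Quotient.ind fun x => ⟨fun hx => ⟨x, (hM x).2 fun y hxy hy => ?_, rfl⟩, ?_⟩
    · exact hx ⟨y, hy, Quotient.sound (r.iseqv.symm hxy)⟩
    · rintro ⟨z, hz, hzx⟩ ⟨y, hy, hyx⟩
      exact (hM z).1 hz y (Quotient.exact (hzx.trans hyx.symm)) hy
  rw [card_quotient_comap_subtype r (· ∈ N), card_quotient_comap_subtype r (· ∈ M),
    ← Nat.card_congr (Equiv.subtypeEquivRight hcompl), ← Nat.card_sum]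
  classical exact Nat.card_congr (Equiv.sumCompl (meets N)).symm

end Cycles

section Restriction

theorem firstReturn_eq_apply {f : Perm α} {p : α → Prop} (hp : ∀ x, p (f x) ↔ p x) {x : α}
    (hx : p x) : firstReturn f p x = f x := by
  have h1 : 1 ∈ {k : ℕ | 0 < k ∧ p ((f ^ k) x)} := ⟨one_pos, by simpa using (hp x).2 hx⟩
  have hinf : sInf {k : ℕ | 0 < k ∧ p ((f ^ k) x)} = 1 :=
    le_antisymm (Nat.sInf_le h1) (Nat.sInf_mem ⟨1, h1⟩).1
  simp [firstReturn, hinf]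

theorem restrictPerm_eq_subtypePerm (f : Perm α) {p : α → Prop} (hp : ∀ x, p (f x) ↔ p x) :
    restrictPerm f p = f.subtypePerm hp := by
  have hex : ∃ e : Perm {x // p x}, ∀ x : {x // p x}, (e x : α) = firstReturn f p x :=
    ⟨f.subtypePerm hp, fun x => (firstReturn_eq_apply hp x.2).symm⟩
  rw [restrictPerm, dif_pos hex]
  ext x
  rw [hex.choose_spec x, firstReturn_eq_apply hp x.2]
  rfl

theorem restrictPerm_inv_mul (f g : Perm α) {p : α → Prop} (hf : ∀ x, p (f x) ↔ p x)
    (hg : ∀ x, p (g x) ↔ p x) :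
    (restrictPerm f p)⁻¹ * restrictPerm g p = restrictPerm (f⁻¹ * g) p := by
  have hf' : ∀ x, p (f⁻¹ x) ↔ p x := fun x => by simpa using (hf (f⁻¹ x)).symm
  rw [restrictPerm_eq_subtypePerm f hf, restrictPerm_eq_subtypePerm g hg,
    restrictPerm_eq_subtypePerm (f⁻¹ * g) fun x => (hf' (g x)).trans (hg x),
    Perm.inv_subtypePerm, Perm.subtypePerm_mul]

variable [Finite α]

theorem numCycles_eq_sum_restrictPerm {f g : Perm α} (h : sameCycleSetoid f ≤ sameCycleSetoid g)
    [Fintype (Quotient (sameCycleSetoid g))] :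
    numCycles f = ∑ c : Quotient (sameCycleSetoid g),
      numCycles (restrictPerm f (g.SameCycle c.out)) := by
  let F : Quotient (sameCycleSetoid f) → Quotient (sameCycleSetoid g) := Quotient.map id h
  rw [numCycles, ← Nat.card_congr (Equiv.sigmaFiberEquiv F), Nat.card_sigma]
  refine Finset.sum_congr rfl fun c _ => ?_
  rw [restrictPerm_eq_subtypePerm f (sameCycle_apply_iff_of_le h c.out), numCycles_subtypePerm]
  refine Nat.card_congr (Equiv.subtypeEquivRight fun q => ?_)
  induction q using Quotient.inductionOn with | h y => ?_
  change ⟦y⟧ = c ↔ _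
  constructor
  · intro hy
    exact ⟨y, (Quotient.exact (hy.trans c.out_eq.symm)).symm, rfl⟩
  · rintro ⟨x, hx, hxy⟩
    exact (Quotient.sound ((h (Quotient.exact hxy)).symm.trans hx.symm)).trans c.out_eq

theorem card_eq_sum_card_sameCycle (g : Perm α) [Fintype (Quotient (sameCycleSetoid g))] :
    Nat.card α = ∑ c : Quotient (sameCycleSetoid g), Nat.card {x // g.SameCycle c.out x} := by
  have h1 : sameCycleSetoid (1 : Perm α) ≤ sameCycleSetoid g := fun x _ hxy =>
    Perm.sameCycle_one.1 hxy ▸ .refl g x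
  rw [← numCycles_one, numCycles_eq_sum_restrictPerm h1]
  refine Finset.sum_congr rfl fun c _ => ?_
  rw [restrictPerm_eq_subtypePerm 1 fun _ => Iff.rfl, Perm.subtypePerm_one, numCycles_one]

theorem numCycles_add_numCycles_inv_mul_of_le' {σ π : Perm α} (h : le' σ π) :
    numCycles σ + numCycles (σ⁻¹ * π) = Nat.card α + numCycles π := by
  let := Fintype.ofFinite (Quotient (sameCycleSetoid π))
  have hσ : sameCycleSetoid σ ≤ sameCycleSetoid π := fun x y => h.1 x y
  rw [numCycles_eq_sum_restrictPerm hσ,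
    numCycles_eq_sum_restrictPerm (sameCycleSetoid_inv_mul_le_of_le hσ),
    card_eq_sum_card_sameCycle π, numCycles, Nat.card_eq_fintype_card, Fintype.card_eq_sum_ones,
    ← Finset.sum_add_distrib, ← Finset.sum_add_distrib]
  refine Finset.sum_congr rfl fun c _ => ?_
  rw [← restrictPerm_inv_mul σ π (sameCycle_apply_iff_of_le hσ c.out)
    (sameCycle_apply_iff_of_le le_rfl c.out), h.2 c.out]

theorem separates_inv_mul_of_restrictPerm {σ π : Perm α}
    (hσ : sameCycleSetoid σ ≤ sameCycleSetoid π) {N : Set α}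
    (h : ∀ x, Separates ((restrictPerm σ (π.SameCycle x))⁻¹ * restrictPerm π (π.SameCycle x))
      (Subtype.val ⁻¹' N)) :
    Separates (σ⁻¹ * π) N := by
  intro x hx y hy hxy
  have hτ := sameCycleSetoid_inv_mul_le_of_le hσ
  have hsep := h x
  rw [restrictPerm_inv_mul σ π (sameCycle_apply_iff_of_le hσ x)
      (sameCycle_apply_iff_of_le le_rfl x),
    restrictPerm_eq_subtypePerm _ (sameCycle_apply_iff_of_le hτ x)] at hsep
  exact congrArg Subtype.val
    (hsep ⟨x, .refl π x⟩ hx ⟨y, hτ hxy⟩ hy (Perm.sameCycle_subtypePerm.2 hxy))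

end Restriction

section CutJoin

variable {τ ρ : Perm α} {N : Set α}

theorem apply_mem_iff_of_fixed (hρ : ∀ x ∉ N, ρ x = x) (x : α) : ρ x ∈ N ↔ x ∈ N := by
  by_cases hx : x ∈ N
  · refine iff_of_true (by_contra fun h => h ?_) hx
    rwa [ρ.injective (hρ _ h)]
  · rw [hρ x hx]

variable [Finite α]

/-- The `τ`-cycle through `ρ x` meets `N` only at `ρ x`, so `τ * ρ` runs through all of it
before returning. -/
theorem sameCycle_mul_of_mem (hsep : Separates τ N) (hρ : ∀ x ∉ N, ρ x = x) {x y : α}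
    (hx : x ∈ N) (hy : τ.SameCycle (ρ x) y) : (τ * ρ).SameCycle x y := by
  have hρx : ρ x ∈ N := (apply_mem_iff_of_fixed hρ x).2 hx
  have hpow : ∀ k, 1 ≤ k → (τ * ρ).SameCycle x ((τ ^ k) (ρ x)) := by
    refine Nat.le_induction (by simpa using (Perm.SameCycle.refl (τ * ρ) x).apply_right) ?_
    intro k _ ih
    rw [pow_succ', Perm.mul_apply]
    by_cases hk : (τ ^ k) (ρ x) ∈ N
    · rw [← hsep _ hρx _ hk (Perm.sameCycle_pow_right.2 (.refl τ _))]
      exact (Perm.SameCycle.refl (τ * ρ) x).apply_right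
    · simpa [hρ _ hk] using ih.apply_right
  obtain ⟨k, hk, -, rfl⟩ := hy.exists_pow_eq''
  exact hpow k hk

theorem sameCycle_of_mul_of_mem (hsep : Separates τ N) (hρ : ∀ x ∉ N, ρ x = x) {x y : α}
    (hx : x ∈ N) (hy : y ∈ N) (hxy : (τ * ρ).SameCycle x y) : ρ.SameCycle x y := by
  obtain ⟨u, hu, hxu, huy⟩ : ∃ u ∈ N, ρ.SameCycle x u ∧ τ.SameCycle u y := by
    refine Perm.SameCycle.induction_apply
      (P := fun a => ∃ u ∈ N, ρ.SameCycle x u ∧ τ.SameCycle u a) ?_ hxy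
      ⟨x, hx, .refl ρ x, .refl τ x⟩
    rintro a ⟨u, hu, hxu, hua⟩
    by_cases ha : a ∈ N
    · obtain rfl := hsep u hu a ha hua
      exact ⟨ρ u, (apply_mem_iff_of_fixed hρ u).2 hu, hxu.apply_right,
        (Perm.SameCycle.refl τ _).apply_right⟩
    · exact ⟨u, hu, hxu, by simpa [hρ a ha] using hua.apply_right⟩
  rwa [hsep u hu y hy huy] at hxu

theorem sameCycle_mul_iff_of_mem (hsep : Separates τ N) (hρ : ∀ x ∉ N, ρ x = x) {x y : α}
    (hx : x ∈ N) (hy : y ∈ N) : (τ * ρ).SameCycle x y ↔ ρ.SameCycle x y := by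
  refine ⟨sameCycle_of_mul_of_mem hsep hρ hx hy, fun hxy => ?_⟩
  refine (Perm.SameCycle.induction_apply (P := fun a => a ∈ N ∧ (τ * ρ).SameCycle x a)
    (fun a ha => ⟨(apply_mem_iff_of_fixed hρ a).2 ha.1, ?_⟩) hxy ⟨hx, .refl _ x⟩).2
  exact ha.2.trans (sameCycle_mul_of_mem hsep hρ ha.1 (.refl τ (ρ a)))

theorem sameCycleSetoid_le_mul (hsep : Separates τ N) (hρ : ∀ x ∉ N, ρ x = x) :
    sameCycleSetoid ρ ≤ sameCycleSetoid (τ * ρ) :=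
  sameCycleSetoid_le_of_rel_apply fun a => by
    by_cases ha : a ∈ N
    · exact sameCycle_mul_of_mem hsep hρ ha (.refl τ (ρ a))
    · rw [hρ a ha]

theorem sameCycle_mul_iff_of_avoids (hρ : ∀ x ∉ N, ρ x = x) {x : α}
    (hx : ∀ y, τ.SameCycle x y → y ∉ N) (y : α) : (τ * ρ).SameCycle x y ↔ τ.SameCycle x y :=
  (sameCycle_iff_of_eqOn (fun a ha => by rw [Perm.mul_apply, hρ a (hx a ha)]) y).symm

theorem avoids_iff_mul_avoids (hsep : Separates τ N) (hρ : ∀ x ∉ N, ρ x = x) (x : α) :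
    (∀ y, τ.SameCycle x y → y ∉ N) ↔ ∀ y, (τ * ρ).SameCycle x y → y ∉ N := by
  refine ⟨fun h y hy => h y ((sameCycle_mul_iff_of_avoids hρ h y).1 hy), fun h y hy hyN => ?_⟩
  have hy' : ρ⁻¹ y ∈ N := (apply_mem_iff_of_fixed hρ _).1 (by simpa using hyN)
  exact h (ρ⁻¹ y) (sameCycle_mul_of_mem hsep hρ hy' (by simpa using hy.symm)).symm hy'

/-- Cut-and-join: a permutation `ρ` supported on a set `N` separated by `τ` merges the cycles
of `τ` through `N` along the cycles of `ρ`. -/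
theorem numCycles_mul_add_card (hsep : Separates τ N) (hρ : ∀ x ∉ N, ρ x = x) :
    numCycles (τ * ρ) + Nat.card N =
      numCycles τ + numCycles (ρ.subtypePerm (apply_mem_iff_of_fixed hρ)) := by
  let M : Set α := {x | ∀ y, τ.SameCycle x y → y ∉ N}
  have hτN : Nat.card (Quotient ((sameCycleSetoid τ).comap ((↑) : N → α))) = Nat.card N :=
    card_quotient_of_rel_imp_eq _ fun x y hxy => Subtype.ext (hsep x x.2 y y.2 hxy)
  have hτρN : (sameCycleSetoid (τ * ρ)).comap ((↑) : N → α) =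
      sameCycleSetoid (ρ.subtypePerm (apply_mem_iff_of_fixed hρ)) :=
    Setoid.ext fun x y =>
      (sameCycle_mul_iff_of_mem hsep hρ x.2 y.2).trans Perm.sameCycle_subtypePerm.symm
  have hτρM : (sameCycleSetoid (τ * ρ)).comap ((↑) : M → α) =
      (sameCycleSetoid τ).comap ((↑) : M → α) :=
    Setoid.ext fun x y => sameCycle_mul_iff_of_avoids hρ x.2 y
  rw [numCycles, numCycles, numCycles,
    card_quotient_eq_add (sameCycleSetoid (τ * ρ)) N M (avoids_iff_mul_avoids hsep hρ),
    card_quotient_eq_add (sameCycleSetoid τ) N M fun _ => Iff.rfl, hτN, hτρN, hτρM]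
  omega

end CutJoin

section Merge

variable {ι : Type*} (n : ι → ℕ) (hn : ∀ i, 0 < n i)

theorem finRotate_val_of_lt {m : ℕ} {j : Fin m} (h : (j : ℕ) + 1 < m) :
    (finRotate m j : ℕ) = j + 1 := by
  obtain ⟨m, rfl⟩ : ∃ k, m = k + 1 := ⟨m - 1, by omega⟩
  rw [coe_finRotate, if_neg (by simp [Fin.ext_iff]; omega)]

theorem finRotate_val_of_succ_eq {m : ℕ} {j : Fin m} (h : (j : ℕ) + 1 = m) :
    (finRotate m j : ℕ) = 0 := by
  obtain ⟨m, rfl⟩ : ∃ k, m = k + 1 := ⟨m - 1, by omega⟩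
  rw [coe_finRotate, if_pos (by simp [Fin.ext_iff]; omega)]

def blockStart (i : ι) : (i : ι) × Fin (n i) := ⟨i, ⟨0, hn i⟩⟩

def blockEnd (i : ι) : (i : ι) × Fin (n i) := ⟨i, ⟨n i - 1, Nat.sub_lt (hn i) one_pos⟩⟩

def blockEnds : Set ((i : ι) × Fin (n i)) := {y | (y.2 : ℕ) = n y.1 - 1}

variable {n}

theorem mergePerm_apply_of_lt (τ : Perm ι) {x : (i : ι) × Fin (n i)} (h : (x.2 : ℕ) + 1 < n x.1) :
    mergePerm n hn τ x = ⟨x.1, ⟨x.2 + 1, h⟩⟩ := by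
  obtain ⟨i, j⟩ := x
  have hrot : blockRotate n ⟨i, j⟩ = ⟨i, ⟨j + 1, h⟩⟩ :=
    congrArg (Sigma.mk i) (Fin.ext (finRotate_val_of_lt h))
  rw [mergePerm, Perm.mul_apply, hrot]
  exact Perm.extendDomain_apply_not_subtype _ _ (by simp)

theorem mergePerm_apply_of_succ_eq (τ : Perm ι) {x : (i : ι) × Fin (n i)}
    (h : (x.2 : ℕ) + 1 = n x.1) : mergePerm n hn τ x = blockStart n hn (τ x.1) := by
  obtain ⟨i, j⟩ := x
  have hrot : blockRotate n ⟨i, j⟩ = blockStart n hn i :=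
    congrArg (Sigma.mk i) (Fin.ext (finRotate_val_of_succ_eq h))
  rw [mergePerm, Perm.mul_apply, hrot]
  exact Perm.extendDomain_apply_subtype _ (zeroSection n hn) (rfl : (0 : ℕ) = 0)

theorem mergePerm_blockEnd (τ : Perm ι) (i : ι) :
    mergePerm n hn τ (blockEnd n hn i) = blockStart n hn (τ i) :=
  mergePerm_apply_of_succ_eq hn τ (Nat.sub_add_cancel (hn i))

theorem mem_blockEnds_iff (x : (i : ι) × Fin (n i)) : x ∈ blockEnds n ↔ (x.2 : ℕ) + 1 = n x.1 := by
  have := x.2.2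
  change (x.2 : ℕ) = n x.1 - 1 ↔ _
  omega

def blockEndsEquiv : ι ≃ blockEnds n where
  toFun i := ⟨blockEnd n hn i, rfl⟩
  invFun y := y.1.1
  left_inv _ := rfl
  right_inv := fun ⟨⟨i, _⟩, hj⟩ => Subtype.ext (congrArg (Sigma.mk i) (Fin.ext hj.symm))

theorem inv_mul_mergePerm_apply_of_notMem (π γ : Perm ι) {x : (i : ι) × Fin (n i)}
    (hx : x ∉ blockEnds n) : ((mergePerm n hn π)⁻¹ * mergePerm n hn γ) x = x := by
  have h : (x.2 : ℕ) + 1 < n x.1 := lt_of_le_of_ne x.2.2 (mt (mem_blockEnds_iff x).2 hx)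
  rw [Perm.mul_apply, Perm.inv_eq_iff_eq, mergePerm_apply_of_lt hn γ h,
    mergePerm_apply_of_lt hn π h]

theorem inv_mul_mergePerm_blockEnd (π γ : Perm ι) (i : ι) :
    ((mergePerm n hn π)⁻¹ * mergePerm n hn γ) (blockEnd n hn i) =
      blockEnd n hn ((π⁻¹ * γ) i) := by
  rw [Perm.mul_apply, Perm.inv_eq_iff_eq, mergePerm_blockEnd, mergePerm_blockEnd]
  simp

theorem sameCycle_blockStart (τ : Perm ι) (x : (i : ι) × Fin (n i)) :
    (mergePerm n hn τ).SameCycle (blockStart n hn x.1) x := by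
  obtain ⟨i, j, hj⟩ := x
  induction j with
  | zero => rfl
  | succ j ih =>
    change (mergePerm n hn τ).SameCycle (blockStart n hn i) _
    rw [← mergePerm_apply_of_lt hn τ (x := ⟨i, ⟨j, by omega⟩⟩) hj]
    exact (ih (by omega)).apply_right

variable [Finite ι]

theorem mergePerm_sameCycle_iff (τ : Perm ι) (x y : (i : ι) × Fin (n i)) :
    (mergePerm n hn τ).SameCycle x y ↔ τ.SameCycle x.1 y.1 := by
  constructor
  · refine fun hxy => Perm.SameCycle.induction_apply (P := fun a => τ.SameCycle x.1 a.1)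
      (fun a ha => ?_) hxy (.refl τ x.1)
    by_cases h : (a.2 : ℕ) + 1 < n a.1
    · rwa [mergePerm_apply_of_lt hn τ h]
    · rw [mergePerm_apply_of_succ_eq hn τ (x := a) (by omega)]
      exact ha.apply_right
  · intro hxy
    have hstart : sameCycleSetoid τ ≤
        (sameCycleSetoid (mergePerm n hn τ)).comap (blockStart n hn) :=
      sameCycleSetoid_le_of_rel_apply fun i => by
        change (mergePerm n hn τ).SameCycle _ _
        rw [← mergePerm_blockEnd hn τ i]
        exact (sameCycle_blockStart hn τ (blockEnd n hn i)).apply_right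
    exact (sameCycle_blockStart hn τ x).symm.trans
      ((hstart hxy).trans (sameCycle_blockStart hn τ y))

theorem numCycles_mergePerm (τ : Perm ι) : numCycles (mergePerm n hn τ) = numCycles τ := by
  have h : sameCycleSetoid (mergePerm n hn τ) = (sameCycleSetoid τ).comap Sigma.fst :=
    Setoid.ext (mergePerm_sameCycle_iff hn τ)
  rw [numCycles, numCycles, h, Nat.card_congr (Setoid.comapQuotientEquiv _ _)]
  exact Nat.card_congr (Equiv.subtypeUnivEquiv
    (Quotient.ind fun i => ⟨blockStart n hn i, rfl⟩))

theorem joinTop_mergePerm {π γ : Perm ι} (h : JoinTop π γ) :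
    JoinTop (mergePerm n hn π) (mergePerm n hn γ) := by
  let J := joinSetoid (mergePerm n hn π) (mergePerm n hn γ)
  have hstart : joinSetoid π γ ≤ J.comap (blockStart n hn) :=
    sup_le (fun i i' hii' => le_sup_left (b := sameCycleSetoid (mergePerm n hn γ))
        ((mergePerm_sameCycle_iff hn π _ _).2 hii'))
      (fun i i' hii' => le_sup_right (a := sameCycleSetoid (mergePerm n hn π))
        ((mergePerm_sameCycle_iff hn γ _ _).2 hii'))
  have hblock : ∀ x : (i : ι) × Fin (n i), J (blockStart n hn x.1) x := fun x =>
    le_sup_left (b := sameCycleSetoid (mergePerm n hn γ)) (sameCycle_blockStart hn π x)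
  exact fun x y => J.iseqv.trans (J.iseqv.symm (hblock x))
    (J.iseqv.trans (hstart (h x.1 y.1)) (hblock y))

theorem numCycles_inv_mul_mergePerm_add_card {σ : Perm ((i : ι) × Fin (n i))} {π : Perm ι}
    (γ : Perm ι) (hsep : Separates (σ⁻¹ * mergePerm n hn π) (blockEnds n)) :
    numCycles (σ⁻¹ * mergePerm n hn γ) + Nat.card ι =
      numCycles (σ⁻¹ * mergePerm n hn π) + numCycles (π⁻¹ * γ) := by
  have hρ : ∀ x ∉ blockEnds n, ((mergePerm n hn π)⁻¹ * mergePerm n hn γ) x = x :=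
    fun _ => inv_mul_mergePerm_apply_of_notMem hn π γ
  have hρN : ((mergePerm n hn π)⁻¹ * mergePerm n hn γ).subtypePerm (apply_mem_iff_of_fixed hρ) =
      (blockEndsEquiv hn).permCongr (π⁻¹ * γ) := by
    refine Equiv.ext fun y => ?_
    obtain ⟨i, rfl⟩ := (blockEndsEquiv hn).surjective y
    apply Subtype.ext
    simp only [Perm.subtypePerm_apply, Equiv.permCongr_apply, Equiv.symm_apply_apply]
    exact inv_mul_mergePerm_blockEnd hn π γ i
  have hcut := numCycles_mul_add_card hsep hρ
  rwa [mul_assoc, mul_inv_cancel_left, hρN, numCycles_permCongr,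
    ← Nat.card_congr (blockEndsEquiv hn)] at hcut

theorem joinTop_of_separates {σ : Perm ((i : ι) × Fin (n i))} {π γ : Perm ι}
    (hπγ : JoinTop π γ) (hsep : Separates (σ⁻¹ * mergePerm n hn π) (blockEnds n)) :
    JoinTop σ (mergePerm n hn γ) := by
  set τ := σ⁻¹ * mergePerm n hn π
  set ρ := (mergePerm n hn π)⁻¹ * mergePerm n hn γ
  have hρ : ∀ x ∉ blockEnds n, ρ x = x := fun _ => inv_mul_mergePerm_apply_of_notMem hn π γ
  have hτρ : sameCycleSetoid (τ * ρ) ≤ joinSetoid σ (mergePerm n hn γ) := by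
    simpa [τ, ρ, mul_assoc, sameCycleSetoid_inv, joinSetoid] using
      sameCycleSetoid_mul_le σ⁻¹ (mergePerm n hn γ)
  have hρ' : sameCycleSetoid ρ ≤ joinSetoid σ (mergePerm n hn γ) :=
    (sameCycleSetoid_le_mul hsep hρ).trans hτρ
  have hτ : sameCycleSetoid τ ≤ joinSetoid σ (mergePerm n hn γ) := by
    have := sameCycleSetoid_mul_le (τ * ρ) ρ⁻¹
    rw [mul_inv_cancel_right, sameCycleSetoid_inv] at this
    exact this.trans (sup_le hτρ hρ')
  have hπ : sameCycleSetoid (mergePerm n hn π) ≤ joinSetoid σ (mergePerm n hn γ) := by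
    have := sameCycleSetoid_mul_le σ τ
    rw [mul_inv_cancel_left] at this
    exact this.trans (sup_le le_sup_left hτ)
  exact (joinTop_mergePerm hn hπγ).mono (sup_le hπ le_sup_right)

end Merge

/-- if `π ∈ S_NC(r,s,t)`, `σ ≤ π_{\vec n}` and on each cycle `C̃` of
`π_{\vec n}` the restriction `σ|_{C̃}` is non-crossing with respect to the cycle
`C̃` and `(σ|_{C̃})⁻¹ ⋅ C̃` separates `N ∩ C̃`, then `σ ∈ S_NC(p,q,l)` and
`σ⁻¹π_{\vec n}` separates `N`. -/
theorem stmt18 (r s t : ℕ) (n : ((i : Fin 3) × Fin (![r, s, t] i)) → ℕ)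
    (hn : ∀ x, 0 < n x)
    (N : Set ((x : (i : Fin 3) × Fin (![r, s, t] i)) × Fin (n x)))
    (hN : N = {y | y.2.val = n y.1 - 1})
    (π : Equiv.Perm ((i : Fin 3) × Fin (![r, s, t] i)))
    (hπ : SNC (blockRotate ![r, s, t]) π)
    (σ : Equiv.Perm ((x : (i : Fin 3) × Fin (![r, s, t] i)) × Fin (n x)))
    (h1 : le' σ (mergePerm n hn π))
    (h2 : ∀ x,
      SNC (restrictPerm (mergePerm n hn π) ((mergePerm n hn π).SameCycle x))
        (restrictPerm σ ((mergePerm n hn π).SameCycle x)) ∧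
      Separates
        ((restrictPerm σ ((mergePerm n hn π).SameCycle x))⁻¹ *
          restrictPerm (mergePerm n hn π) ((mergePerm n hn π).SameCycle x))
        (Subtype.val ⁻¹' N)) :
    SNC (mergePerm n hn (blockRotate ![r, s, t])) σ ∧
    Separates (σ⁻¹ * mergePerm n hn π) N := by
  subst hN
  have hσ : sameCycleSetoid σ ≤ sameCycleSetoid (mergePerm n hn π) := fun x y => h1.1 x y
  have hsep : Separates (σ⁻¹ * mergePerm n hn π) (blockEnds n) :=
    separates_inv_mul_of_restrictPerm hσ fun x => (h2 x).2
  have hσπ := numCycles_add_numCycles_inv_mul_of_le' h1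
  have hcut := numCycles_inv_mul_mergePerm_add_card hn (blockRotate ![r, s, t]) hsep
  have hπ_merge := numCycles_mergePerm hn π
  have hγ_merge := numCycles_mergePerm hn (blockRotate ![r, s, t])
  refine ⟨⟨joinTop_of_separates hn hπ.1 hsep, ?_⟩, hsep⟩
  -- restated so that `omega` sees the index type as `Fin 3`, as in the other hypotheses
  have hπγ : numCycles π + numCycles (π⁻¹ * blockRotate ![r, s, t]) +
      numCycles (blockRotate ![r, s, t]) = Nat.card ((i : Fin 3) × Fin (![r, s, t] i)) + 2 :=
    hπ.2
  omega

end ThirdOrderFree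
end
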